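/- arXiv:1403.0789 — 8 statements merged into one kernel-verified Lean document; each statement's English description precedes it below -/
import Mathlib

section
/- Let G be a simple graph with an instance of Requirement Induced Disjoint Paths given by terminal pairs {s_1,t_1},...,{s_k,t_k} and requirements r_1,...,r_k. If the instance has a solution, then it has a solution that contains all terminal paths; that is, a solution in which, for every index i such that s_i and t_i are adjacent in G, the one-edge path s_i t_i is one of the r_i solution paths joining s_i and t_i. -/
open SimpleGraph

variable {V : Type*}

/-- An interval representation of a simple graph: each vertex gets a closed real
interval `[l u, r u]` with `l u < r u`, and two distinct vertices are adjacent
iff their intervals intersect. -/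
structure IntervalRep (G : SimpleGraph V) where
  l : V → ℝ
  r : V → ℝ
  lt : ∀ u, l u < r u
  adj_iff : ∀ u v, u ≠ v →
    (G.Adj u v ↔ (Set.Icc (l u) (r u) ∩ Set.Icc (l v) (r v)).Nonempty)

/-- A path in `G` together with its two end-vertices. -/
structure IndexedPath (G : SimpleGraph V) where
  a : V
  b : V
  walk : G.Walk a b
  isPath : walk.IsPath

namespace IndexedPath

variable {G : SimpleGraph V}

/-- The set of end-vertices of the path. -/
def ends (P : IndexedPath G) : Set V := {P.a, P.b}

/-- `v` is an inner vertex of `P`, i.e. a vertex of `P` other than its ends. -/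
def IsInner (P : IndexedPath G) (v : V) : Prop :=
  v ∈ P.walk.support.tail.dropLast

/-- `P` has no inner chords: any edge between two of its vertices is either an
edge of the path itself or the edge between its two end-vertices. -/
def NoInnerChords (P : IndexedPath G) : Prop :=
  ∀ x y, x ∈ P.walk.support → y ∈ P.walk.support → G.Adj x y →
    s(x, y) ∈ P.walk.edges ∨ s(x, y) = s(P.a, P.b)

/-- `P` joins the vertices `x` and `y`. -/
def Joins (P : IndexedPath G) (x y : V) : Prop :=
  (P.a = x ∧ P.b = y) ∨ (P.a = y ∧ P.b = x)

end IndexedPath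

/-- A family of pairwise distinct paths is mutually induced if: (i) each path has
no inner chords; (ii) two distinct paths share only vertices that are ends of both;
(iii) no inner vertex of one path is adjacent to a vertex `v` of another path,
except when `v` is an end-vertex of both paths. -/
def MutuallyInduced {G : SimpleGraph V} {ι : Type*} (P : ι → IndexedPath G) : Prop :=
  (∀ i j, i ≠ j → P i ≠ P j) ∧
  (∀ i, (P i).NoInnerChords) ∧
  (∀ i j, i ≠ j → ∀ v, v ∈ (P i).walk.support → v ∈ (P j).walk.support →
      v ∈ (P i).ends ∧ v ∈ (P j).ends) ∧
  (∀ i j, i ≠ j → ∀ u v, (P i).IsInner u → v ∈ (P j).walk.support → G.Adj u v →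
      v ∈ (P i).ends ∧ v ∈ (P j).ends)

/-- The covered interval of a path: the union of the intervals of its inner vertices. -/
def coveredInterval {G : SimpleGraph V} (ρ : IntervalRep G) (P : IndexedPath G) : Set ℝ :=
  ⋃ v ∈ {w : V | P.IsInner w}, Set.Icc (ρ.l v) (ρ.r v)

/-- A solution to Requirement Induced Disjoint Paths: `l = r 1 + ... + r k`
mutually induced paths, exactly `r i` of which join `s i` and `t i`. -/
def RIDPSolution {G : SimpleGraph V} (k : ℕ) (s t : Fin k → V) (r : Fin k → ℕ)
    {l : ℕ} (P : Fin l → IndexedPath G) : Prop :=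
  l = ∑ i, r i ∧ MutuallyInduced P ∧
    ∀ i, Nat.card {j : Fin l // (P j).Joins (s i) (t i)} = r i

section Aux

variable {G : SimpleGraph V}

private lemma step_lemma {k : ℕ} (s t : Fin k → V) (r : Fin k → ℕ)
    (hr : ∀ i, 0 < r i) {l : ℕ} (P : Fin l → IndexedPath G)
    (hP : RIDPSolution k s t r P) (i0 : Fin k) (hadj : G.Adj (s i0) (t i0))
    (hnot : ¬ ∃ j, (P j).Joins (s i0) (t i0) ∧ (P j).walk.length = 1) :
    ∃ P' : Fin l → IndexedPath G, RIDPSolution k s t r P' ∧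
      (∃ j, (P' j).Joins (s i0) (t i0) ∧ (P' j).walk.length = 1) ∧
      ∀ i, (∃ j, (P j).Joins (s i) (t i) ∧ (P j).walk.length = 1) →
        (∃ j, (P' j).Joins (s i) (t i) ∧ (P' j).walk.length = 1) := by
  classical
  obtain ⟨hl, ⟨hD, hC, hS, hI⟩, hcard⟩ := hP
  -- pick an index j0 whose path joins s i0 and t i0
  have hpos : 0 < Nat.card {j : Fin l // (P j).Joins (s i0) (t i0)} :=
    (hcard i0) ▸ hr i0
  obtain ⟨⟨j0, hj0⟩, -⟩ := Nat.card_pos_iff.mp hpos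
  -- the one-edge path
  have hQpath : (Walk.cons hadj Walk.nil).IsPath := by
    rw [Walk.cons_isPath_iff]
    exact ⟨Walk.IsPath.nil, by simp [hadj.ne]⟩
  set Q : IndexedPath G := ⟨s i0, t i0, Walk.cons hadj Walk.nil, hQpath⟩ with hQdef
  set P' : Fin l → IndexedPath G := Function.update P j0 Q with hP'def
  have hP'j0 : P' j0 = Q := Function.update_self _ _ _
  have hP'ne : ∀ j, j ≠ j0 → P' j = P j := fun j hj => Function.update_of_ne hj _ _
  have hQsupp : Q.walk.support = [s i0, t i0] := rfl
  have hQlen : Q.walk.length = 1 := rfl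
  have hQjoins : Q.Joins (s i0) (t i0) := Or.inl ⟨rfl, rfl⟩
  have hQinner : ∀ v, ¬ Q.IsInner v := by
    intro v hv
    simp [IndexedPath.IsInner, hQsupp] at hv
  have hQends : ∀ v ∈ Q.walk.support, v ∈ Q.ends := by
    intro v hv
    simpa [IndexedPath.ends, hQdef] using (by simpa [hQsupp] using hv :
      v = s i0 ∨ v = t i0)
  have hsub : ∀ v ∈ Q.walk.support, v ∈ (P j0).walk.support := by
    intro v hv
    rcases (by simpa [hQsupp] using hv : v = s i0 ∨ v = t i0) with rfl | rfl
    · rcases hj0 with ⟨ha, _⟩ | ⟨_, hb⟩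
      · exact ha ▸ Walk.start_mem_support _
      · exact hb ▸ Walk.end_mem_support _
    · rcases hj0 with ⟨_, hb⟩ | ⟨ha, _⟩
      · exact hb ▸ Walk.end_mem_support _
      · exact ha ▸ Walk.start_mem_support _
  have hends0 : (P j0).ends = Q.ends := by
    rcases hj0 with ⟨ha, hb⟩ | ⟨ha, hb⟩ <;>
      simp [IndexedPath.ends, hQdef, ha, hb, Set.pair_comm]
  have hJ : ∀ x y, Q.Joins x y ↔ (P j0).Joins x y := by
    intro x y
    have hrfl : Q.Joins x y ↔ ((s i0 = x ∧ t i0 = y) ∨ (s i0 = y ∧ t i0 = x)) := Iff.rfl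
    rw [hrfl]
    unfold IndexedPath.Joins
    rcases hj0 with ⟨ha, hb⟩ | ⟨ha, hb⟩ <;> rw [ha, hb] <;> tauto
  -- the new family is a solution
  have hQneP : ∀ j', Q ≠ P j' := by
    intro j' heq
    exact hnot ⟨j', by rw [← heq]; exact ⟨hQjoins, hQlen⟩⟩
  refine ⟨P', ⟨hl, ⟨?_, ?_, ?_, ?_⟩, ?_⟩, ⟨j0, by rw [hP'j0]; exact ⟨hQjoins, hQlen⟩⟩, ?_⟩
  · -- distinctness
    intro j j' hne
    by_cases hj : j = j0 <;> by_cases hj' : j' = j0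
    · exact absurd (hj.trans hj'.symm) hne
    · subst hj; rw [hP'j0, hP'ne j' hj']; exact hQneP j'
    · subst hj'; rw [hP'j0, hP'ne j hj]
      exact fun h => hQneP j h.symm
    · rw [hP'ne j hj, hP'ne j' hj']; exact hD j j' hne
  · -- no inner chords
    intro j
    by_cases hj : j = j0
    · subst hj; rw [hP'j0]
      intro x y hx hy hxy
      right
      rcases (by simpa [hQsupp] using hx : x = s i0 ∨ x = t i0) with rfl | rfl <;>
        rcases (by simpa [hQsupp] using hy : y = s i0 ∨ y = t i0) with rfl | rfl
      · exact absurd hxy (G.irrefl)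
      · rfl
      · exact Sym2.eq_swap
      · exact absurd hxy (G.irrefl)
    · rw [hP'ne j hj]; exact hC j
  · -- sharing only at common ends
    intro j j' hne v hvj hvj'
    by_cases hj : j = j0 <;> by_cases hj' : j' = j0
    · exact absurd (hj.trans hj'.symm) hne
    · rw [hj, hP'j0] at hvj; rw [hP'ne j' hj'] at hvj'
      have := hS j0 j' (fun h => hne (by rw [hj, h])) v (hsub v hvj) hvj'
      exact ⟨by rw [hj, hP'j0]; exact hQends v hvj, by rw [hP'ne j' hj']; exact this.2⟩
    · rw [hj', hP'j0] at hvj'; rw [hP'ne j hj] at hvj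
      have := hS j j0 (fun h => hne (by rw [hj', h])) v hvj (hsub v hvj')
      exact ⟨by rw [hP'ne j hj]; exact this.1, by rw [hj', hP'j0]; exact hQends v hvj'⟩
    · rw [hP'ne j hj] at hvj ⊢; rw [hP'ne j' hj'] at hvj' ⊢
      exact hS j j' hne v hvj hvj'
  · -- no adjacency from inner vertices
    intro j j' hne u v hu hv huv
    by_cases hj : j = j0
    · rw [hj, hP'j0] at hu; exact absurd hu (hQinner u)
    · by_cases hj' : j' = j0
      · rw [hj', hP'j0] at hv ⊢
        rw [hP'ne j hj] at hu ⊢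
        have := hI j j0 (fun h => hne (by rw [hj', h])) u v hu (hsub v hv) huv
        exact ⟨this.1, hQends v hv⟩
      · rw [hP'ne j hj] at hu ⊢; rw [hP'ne j' hj'] at hv ⊢
        exact hI j j' hne u v hu hv huv
  · -- counting
    intro i
    rw [← hcard i]
    apply Nat.card_congr
    apply Equiv.subtypeEquivRight
    intro j
    by_cases hj : j = j0
    · rw [hj, hP'j0]; exact hJ _ _
    · rw [hP'ne j hj]
  · -- preservation
    intro i ⟨j1, hj1J, hj1L⟩
    by_cases hj1 : j1 = j0
    · rw [hj1] at hj1L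
      exact absurd ⟨j0, hj0, hj1L⟩ hnot
    · exact ⟨j1, by rw [hP'ne j1 hj1]; exact ⟨hj1J, hj1L⟩⟩

end Aux

/-- if an instance of Requirement Induced Disjoint Paths has a solution,
then it has a solution containing all terminal paths, i.e. whenever `s i` and `t i`
are adjacent, the one-edge path from `s i` to `t i` is among the solution paths
joining `s i` and `t i`. -/
theorem statement0 {V : Type*} (G : SimpleGraph V) (k : ℕ) (s t : Fin k → V)
    (r : Fin k → ℕ)
    (hst : ∀ i, s i ≠ t i)
    (hpairs : ∀ i j, i ≠ j → s(s i, t i) ≠ s(s j, t j))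
    (hr : ∀ i, 0 < r i)
    (l : ℕ)
    (hsol : ∃ P : Fin l → IndexedPath G, RIDPSolution k s t r P) :
    ∃ P : Fin l → IndexedPath G, RIDPSolution k s t r P ∧
      ∀ i, G.Adj (s i) (t i) →
        ∃ j, (P j).Joins (s i) (t i) ∧ (P j).walk.length = 1 := by
  classical
  obtain ⟨P, hP⟩ := hsol
  suffices H : ∀ n (P : Fin l → IndexedPath G), RIDPSolution k s t r P →
      (Finset.univ.filter (fun i => G.Adj (s i) (t i) ∧
        ¬ ∃ j, (P j).Joins (s i) (t i) ∧ (P j).walk.length = 1)).card ≤ n →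
      ∃ P' : Fin l → IndexedPath G, RIDPSolution k s t r P' ∧
        ∀ i, G.Adj (s i) (t i) →
          ∃ j, (P' j).Joins (s i) (t i) ∧ (P' j).walk.length = 1 by
    exact H _ P hP le_rfl
  intro n
  induction n with
  | zero =>
    intro P hP hcard
    refine ⟨P, hP, fun i hadj => ?_⟩
    by_contra hg
    have hmem : i ∈ Finset.univ.filter (fun i => G.Adj (s i) (t i) ∧
        ¬ ∃ j, (P j).Joins (s i) (t i) ∧ (P j).walk.length = 1) :=
      Finset.mem_filter.2 ⟨Finset.mem_univ _, hadj, hg⟩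
    have := Finset.card_pos.2 ⟨i, hmem⟩
    omega
  | succ n ih =>
    intro P hP hcard
    by_cases hne : (Finset.univ.filter (fun i => G.Adj (s i) (t i) ∧
        ¬ ∃ j, (P j).Joins (s i) (t i) ∧ (P j).walk.length = 1)).Nonempty
    · obtain ⟨i0, hi0⟩ := hne
      obtain ⟨-, hadj0, hbad0⟩ := Finset.mem_filter.1 hi0
      obtain ⟨P', hP', hgood0, hpres⟩ := step_lemma s t r hr P hP i0 hadj0 hbad0
      refine ih P' hP' ?_
      have hsub : (Finset.univ.filter (fun i => G.Adj (s i) (t i) ∧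
          ¬ ∃ j, (P' j).Joins (s i) (t i) ∧ (P' j).walk.length = 1)) ⊆
          (Finset.univ.filter (fun i => G.Adj (s i) (t i) ∧
          ¬ ∃ j, (P j).Joins (s i) (t i) ∧ (P j).walk.length = 1)).erase i0 := by
        intro i hi
        obtain ⟨-, hadj, hg⟩ := Finset.mem_filter.1 hi
        refine Finset.mem_erase.2 ⟨?_, Finset.mem_filter.2 ⟨Finset.mem_univ _, hadj, ?_⟩⟩
        · rintro rfl; exact hg hgood0
        · intro hgi; exact hg (hpres i hgi)
      have h1 := Finset.card_le_card hsub
      have h2 := Finset.card_erase_of_mem hi0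
      omega
    · refine ⟨P, hP, fun i hadj => ?_⟩
      by_contra hg
      exact hne ⟨i, Finset.mem_filter.2 ⟨Finset.mem_univ _, hadj, hg⟩⟩
end

section
/- Let G be a simple graph with an interval representation, let {s_1,t_1},...,{s_k,t_k} be pairwise distinct (as unordered pairs) terminal pairs of distinct vertices with requirements r_1,...,r_k, and let P_1,...,P_l be a solution. Then for every i and every solution path P joining s_i and t_i that has at least one inner vertex, the covered interval I_P intersects the interval of s_i and the interval of t_i, and I_P does not intersect the interval of any terminal vertex other than s_i and t_i (where a terminal vertex is a vertex belonging to some terminal pair). -/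
open SimpleGraph

variable {V : Type*}

section Aux
variable {V : Type*} {G : SimpleGraph V}

lemma mem_dropLast_of_mem_tail_dropLast {α : Type*} {x : α} {l : List α}
    (h : x ∈ l.tail.dropLast) : x ∈ l.dropLast := by
  match l with
  | [] => simp at h
  | [y] => simp at h
  | y :: z :: zs =>
      simp only [List.tail_cons] at h
      simpa using Or.inr h

lemma two_le_length_of_inner {a b : V} {w : G.Walk a b} {v : V}
    (h : v ∈ w.support.tail.dropLast) : 2 ≤ w.length := by
  have hne : w.support.tail.dropLast ≠ [] := List.ne_nil_of_mem h
  by_contra hlt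
  apply hne
  apply List.eq_nil_of_length_eq_zero
  simp [Walk.length_support]
  omega

lemma exists_inner_adj_left {a b : V} (w : G.Walk a b) (h : 2 ≤ w.length) :
    ∃ c ∈ w.support.tail.dropLast, G.Adj a c := by
  cases w with
  | nil => simp at h
  | cons hadj w' =>
      cases w' with
      | nil => simp [Walk.length_cons] at h
      | cons hadj' w'' =>
          refine ⟨_, ?_, hadj⟩
          simp [Walk.support_cons]
          cases hsup : w''.support with
          | nil => exact absurd hsup w''.support_ne_nil
          | cons z zs => simp [hsup]

lemma exists_inner_adj_right {a b : V} (w : G.Walk a b) (h : 2 ≤ w.length) :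
    ∃ c ∈ w.support.tail.dropLast, G.Adj c b := by
  induction w with
  | nil => simp at h
  | cons hadj w' ih =>
      cases w' with
      | nil => simp [Walk.length_cons] at h
      | cons hadj' w'' =>
          cases w'' with
          | nil =>
              refine ⟨_, ?_, hadj'⟩
              simp [Walk.support_cons]
          | cons hadj'' w''' =>
              have h2 : 2 ≤ (Walk.cons hadj' (Walk.cons hadj'' w''')).length := by
                simp [Walk.length_cons]
              obtain ⟨c, hc, hcb⟩ := ih h2
              refine ⟨c, ?_, hcb⟩
              simp only [Walk.support_cons, List.tail_cons]
              exact mem_dropLast_of_mem_tail_dropLast hc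


lemma inner_mem_support {a b : V} {w : G.Walk a b} {v : V}
    (h : v ∈ w.support.tail.dropLast) : v ∈ w.support :=
  List.mem_of_mem_tail (List.dropLast_subset _ h)

lemma joins_sym2 {P : IndexedPath G} {x y : V} (h : P.Joins x y) :
    s(x, y) = s(P.a, P.b) := by
  rcases h with ⟨ha, hb⟩ | ⟨ha, hb⟩
  · rw [ha, hb]
  · rw [ha, hb, Sym2.eq_swap]

end Aux

/-- in a solution, the covered interval of a solution path joining
`s i` and `t i` (with at least one inner vertex) intersects the intervals of `s i`
and `t i`, and intersects the interval of no other terminal vertex. -/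
theorem statement2 {V : Type*} (G : SimpleGraph V) (ρ : IntervalRep G)
    (k : ℕ) (s t : Fin k → V) (r : Fin k → ℕ)
    (hst : ∀ i, s i ≠ t i)
    (hpairs : ∀ i j, i ≠ j → s(s i, t i) ≠ s(s j, t j))
    (hr : ∀ i, 0 < r i)
    (l : ℕ) (P : Fin l → IndexedPath G)
    (hsol : RIDPSolution k s t r P)
    (i : Fin k) (j : Fin l)
    (hjoin : (P j).Joins (s i) (t i))
    (hinner : ∃ v, (P j).IsInner v) :
    (coveredInterval ρ (P j) ∩ Set.Icc (ρ.l (s i)) (ρ.r (s i))).Nonempty ∧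
    (coveredInterval ρ (P j) ∩ Set.Icc (ρ.l (t i)) (ρ.r (t i))).Nonempty ∧
    ∀ (i' : Fin k) (w : V), (w = s i' ∨ w = t i') → w ≠ s i → w ≠ t i →
      coveredInterval ρ (P j) ∩ Set.Icc (ρ.l w) (ρ.r w) = ∅ := by
  obtain ⟨hlen, hMI, hcard⟩ := hsol
  obtain ⟨v0, hv0⟩ := hinner
  have h2 : 2 ≤ (P j).walk.length := two_le_length_of_inner hv0
  obtain ⟨c, hc, hac⟩ := exists_inner_adj_left (P j).walk h2
  obtain ⟨d, hd, hdb⟩ := exists_inner_adj_right (P j).walk h2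
  have hia : (coveredInterval ρ (P j) ∩ Set.Icc (ρ.l ((P j).a)) (ρ.r ((P j).a))).Nonempty := by
    obtain ⟨x, hx1, hx2⟩ := (ρ.adj_iff _ _ hac.ne).1 hac
    exact ⟨x, Set.mem_iUnion₂.2 ⟨c, hc, hx2⟩, hx1⟩
  have hib : (coveredInterval ρ (P j) ∩ Set.Icc (ρ.l ((P j).b)) (ρ.r ((P j).b))).Nonempty := by
    obtain ⟨x, hx1, hx2⟩ := (ρ.adj_iff _ _ hdb.ne).1 hdb
    exact ⟨x, Set.mem_iUnion₂.2 ⟨d, hd, hx1⟩, hx2⟩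
  have hends : ∀ v, v ∈ (P j).ends → v = s i ∨ v = t i := by
    intro v hv
    rcases hv with rfl | rfl
    · rcases hjoin with ⟨ha, hb⟩ | ⟨ha, hb⟩
      · exact Or.inl ha
      · exact Or.inr ha
    · rcases hjoin with ⟨ha, hb⟩ | ⟨ha, hb⟩
      · exact Or.inr hb
      · exact Or.inl hb
  refine ⟨?_, ?_, ?_⟩
  · rcases hjoin with ⟨ha, hb⟩ | ⟨ha, hb⟩
    · exact ha ▸ hia
    · exact hb ▸ hib
  · rcases hjoin with ⟨ha, hb⟩ | ⟨ha, hb⟩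
    · exact hb ▸ hib
    · exact ha ▸ hia
  · intro i' w hw hws hwt
    rw [Set.eq_empty_iff_forall_notMem]
    rintro x ⟨hx1, hx2⟩
    obtain ⟨u, hu, hxu⟩ := Set.mem_iUnion₂.1 hx1
    have hii : i' ≠ i := by
      rintro rfl
      rcases hw with rfl | rfl
      exacts [hws rfl, hwt rfl]
    have hpos : 0 < Nat.card {j : Fin l // (P j).Joins (s i') (t i')} := (hcard i') ▸ hr i'
    obtain ⟨⟨j', hj'⟩⟩ := (Nat.card_pos_iff.1 hpos).1
    have hwsup : w ∈ (P j').walk.support := by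
      rcases hj' with ⟨ha, hb⟩ | ⟨ha, hb⟩ <;> rcases hw with rfl | rfl
      · exact ha ▸ (P j').walk.start_mem_support
      · exact hb ▸ (P j').walk.end_mem_support
      · exact hb ▸ (P j').walk.end_mem_support
      · exact ha ▸ (P j').walk.start_mem_support
    have hjj : j ≠ j' := by
      rintro rfl
      exact hpairs i' i hii ((joins_sym2 hj').trans (joins_sym2 hjoin).symm)
    by_cases huw : u = w
    · subst huw
      have hmem := (hMI.2.2.1 j j' hjj u (inner_mem_support hu) hwsup).1
      rcases hends u hmem with rfl | rfl
      exacts [hws rfl, hwt rfl]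
    · have hadj : G.Adj u w := (ρ.adj_iff u w huw).2 ⟨x, hxu, hx2⟩
      have hmem := (hMI.2.2.2 j j' hjj u w hu hwsup hadj).1
      rcases hends w hmem with rfl | rfl
      exacts [hws rfl, hwt rfl]
end

section
/- Let G be a simple graph with an interval representation, and let P_a and P_b be two distinct paths in a family of mutually induced paths, each having at least one inner vertex. Then the covered intervals I_{P_a} and I_{P_b} are disjoint: I_{P_a} ∩ I_{P_b} = ∅. -/
open SimpleGraph

variable {V : Type*}

namespace SimpleGraph.Walk

variable {G : SimpleGraph V} {u w v : V} {p : G.Walk u w}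

lemma IsPath.ne_start_of_mem_tail_support (hp : p.IsPath) (hv : v ∈ p.support.tail) :
    v ≠ u := by
  rintro rfl
  exact (List.nodup_cons.1 (p.cons_tail_support ▸ hp.support_nodup)).1 hv

lemma IsPath.ne_end_of_mem_dropLast_support (hp : p.IsPath) (hv : v ∈ p.support.dropLast) :
    v ≠ w := by
  rintro rfl
  have := hp.support_nodup
  grind [getLast_support, List.dropLast_concat_getLast, List.nodup_append]

end SimpleGraph.Walk

namespace IndexedPath

variable {G : SimpleGraph V} {P : IndexedPath G} {v : V}

lemma IsInner.mem_support (hv : P.IsInner v) : v ∈ P.walk.support :=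
  List.mem_of_mem_tail (List.mem_of_mem_dropLast hv)

lemma IsInner.notMem_ends (hv : P.IsInner v) : v ∉ P.ends := by
  rintro (rfl | rfl)
  · exact P.isPath.ne_start_of_mem_tail_support (List.mem_of_mem_dropLast hv) rfl
  · rw [IsInner, ← List.tail_dropLast] at hv
    exact P.isPath.ne_end_of_mem_dropLast_support (List.mem_of_mem_tail hv) rfl

end IndexedPath

lemma IntervalRep.adj_of_mem_Icc {G : SimpleGraph V} (ρ : IntervalRep G) {u v : V} {x : ℝ}
    (huv : u ≠ v) (hu : x ∈ Set.Icc (ρ.l u) (ρ.r u)) (hv : x ∈ Set.Icc (ρ.l v) (ρ.r v)) :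
    G.Adj u v :=
  (ρ.adj_iff u v huv).2 ⟨x, hu, hv⟩

namespace MutuallyInduced

variable {G : SimpleGraph V} {ι : Type*} {P : ι → IndexedPath G} {i j : ι} {u v : V}

lemma inner_ne (hP : MutuallyInduced P) (hij : i ≠ j) (hu : (P i).IsInner u)
    (hv : (P j).IsInner v) : u ≠ v := by
  rintro rfl
  exact hu.notMem_ends (hP.2.2.1 i j hij u hu.mem_support hv.mem_support).1

lemma not_adj_inner (hP : MutuallyInduced P) (hij : i ≠ j) (hu : (P i).IsInner u)
    (hv : (P j).IsInner v) : ¬G.Adj u v := fun huv =>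
  hv.notMem_ends (hP.2.2.2 i j hij u v hu hv.mem_support huv).2

end MutuallyInduced

theorem statement3_general {V : Type*} (G : SimpleGraph V) (ρ : IntervalRep G)
    {ι : Type*} (P : ι → IndexedPath G) (hMI : MutuallyInduced P)
    (a b : ι) (hab : a ≠ b) :
    coveredInterval ρ (P a) ∩ coveredInterval ρ (P b) = ∅ := by
  refine Set.eq_empty_of_forall_notMem fun x ⟨hxa, hxb⟩ => ?_
  simp only [coveredInterval, Set.mem_iUnion, Set.mem_ofPred_eq] at hxa hxb
  obtain ⟨u, hu, hxu⟩ := hxa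
  obtain ⟨v, hv, hxv⟩ := hxb
  exact hMI.not_adj_inner hab hu hv (ρ.adj_of_mem_Icc (hMI.inner_ne hab hu hv) hxu hxv)

/-- the covered intervals of two distinct members of a family of
mutually induced paths, each with at least one inner vertex, are disjoint. -/
theorem statement3 {V : Type*} (G : SimpleGraph V) (ρ : IntervalRep G)
    {ι : Type*} (P : ι → IndexedPath G) (hMI : MutuallyInduced P)
    (a b : ι) (hab : a ≠ b)
    (ha : ∃ v, (P a).IsInner v) (hb : ∃ v, (P b).IsInner v) :
    coveredInterval ρ (P a) ∩ coveredInterval ρ (P b) = ∅ :=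
  statement3_general G ρ P hMI a b hab
end

section
/- Let G be a simple graph that has an interval representation, let v and w be adjacent vertices of G, and let P be a path in G from v to w with no inner chords. Then P has at most one inner vertex. -/
open SimpleGraph

variable {V : Type*}

/-! Let `x` be a point shared by the intervals of the adjacent end-vertices `a` and `b`.
Without inner chords, `a` sees only the first inner vertex and `b` only the last one, so when
there are at least two inner vertices none of their intervals contains `x`; being joined by a
path, they all lie on the same side of `x`. Say to the right: the first inner vertex reaches
`a` but not `b`, the last one reaches `b` but not `a`, which forces
`l(first) ≤ r(a) < l(last) ≤ r(b) < l(first)`. -/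

namespace IntervalRep

variable {G : SimpleGraph V} (ρ : IntervalRep G) {u v y : V} {x : ℝ}

theorem adj_iff_left_le_right_of_lt_left (hu : x ∈ Set.Icc (ρ.l u) (ρ.r u)) (hy : x < ρ.l y) :
    G.Adj u y ↔ ρ.l y ≤ ρ.r u := by
  rw [ρ.adj_iff u y (by rintro rfl; linarith [hu.1])]
  constructor
  · rintro ⟨c, hcu, hcy⟩
    exact hcy.1.trans hcu.2
  · intro h
    exact ⟨ρ.l y, ⟨by linarith [hu.1], h⟩, le_rfl, (ρ.lt y).le⟩

theorem adj_iff_left_le_right_of_right_lt (hu : x ∈ Set.Icc (ρ.l u) (ρ.r u)) (hy : ρ.r y < x) :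
    G.Adj u y ↔ ρ.l u ≤ ρ.r y := by
  rw [ρ.adj_iff u y (by rintro rfl; linarith [hu.2])]
  constructor
  · rintro ⟨c, hcu, hcy⟩
    exact hcu.1.trans hcy.2
  · intro h
    exact ⟨ρ.r y, ⟨h, by linarith [hu.2]⟩, (ρ.lt y).le, le_rfl⟩

theorem right_lt_iff_of_adj (huv : G.Adj u v) (hu : x ∉ Set.Icc (ρ.l u) (ρ.r u))
    (hv : x ∉ Set.Icc (ρ.l v) (ρ.r v)) : ρ.r u < x ↔ ρ.r v < x := by
  obtain ⟨c, hcu, hcv⟩ := (ρ.adj_iff u v huv.ne).mp huv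
  simp only [Set.mem_Icc, not_and_or, not_le] at hu hv hcu hcv
  constructor <;> intro h
  · rcases hv with hv | hv <;> linarith
  · rcases hu with hu | hu <;> linarith

theorem right_getVert_lt_iff {a b : V} (w : G.Walk a b) {i j : ℕ} (hij : i ≤ j)
    (hj : j ≤ w.length) (havoid : ∀ k, i ≤ k → k ≤ j →
      x ∉ Set.Icc (ρ.l (w.getVert k)) (ρ.r (w.getVert k))) :
    ρ.r (w.getVert j) < x ↔ ρ.r (w.getVert i) < x := by
  induction j, hij using Nat.le_induction with
  | base => rfl
  | succ j hij ih =>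
    refine (ρ.right_lt_iff_of_adj (w.adj_getVert_succ (by omega)) (havoid j hij (by omega))
      (havoid (j + 1) (by omega) le_rfl)).symm.trans ?_
    exact ih (by omega) fun k hik hkj => havoid k hik (by omega)

theorem adj_or_adj_of_same_side {a b z : V} (ha : x ∈ Set.Icc (ρ.l a) (ρ.r a))
    (hb : x ∈ Set.Icc (ρ.l b) (ρ.r b)) (hy : x ∉ Set.Icc (ρ.l y) (ρ.r y))
    (hz : x ∉ Set.Icc (ρ.l z) (ρ.r z)) (hside : ρ.r y < x ↔ ρ.r z < x)
    (hay : G.Adj a y) (hbz : G.Adj b z) : G.Adj a z ∨ G.Adj b y := by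
  simp only [Set.mem_Icc, not_and_or, not_le] at hy hz
  rcases hy with hy | hy
  · have hz : x < ρ.l z := hz.resolve_right fun h => by linarith [hside.mpr h, ρ.lt y]
    rw [ρ.adj_iff_left_le_right_of_lt_left ha hy] at hay
    rw [ρ.adj_iff_left_le_right_of_lt_left hb hz] at hbz
    rw [ρ.adj_iff_left_le_right_of_lt_left ha hz, ρ.adj_iff_left_le_right_of_lt_left hb hy]
    by_contra! h
    linarith [h.1, h.2]
  · have hz : ρ.r z < x := hside.mp hy
    rw [ρ.adj_iff_left_le_right_of_right_lt ha hy] at hay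
    rw [ρ.adj_iff_left_le_right_of_right_lt hb hz] at hbz
    rw [ρ.adj_iff_left_le_right_of_right_lt ha hz, ρ.adj_iff_left_le_right_of_right_lt hb hy]
    by_contra! h
    linarith [h.1, h.2]

end IntervalRep

namespace IndexedPath

variable {G : SimpleGraph V} {P : IndexedPath G} {i : ℕ}

theorem length_support_tail_dropLast (P : IndexedPath G) :
    P.walk.support.tail.dropLast.length = P.walk.length - 1 := by
  simp

theorem NoInnerChords.not_adj_start_getVert (hnc : P.NoInnerChords) (h1 : 1 < i)
    (hi : i < P.walk.length) : ¬ G.Adj P.a (P.walk.getVert i) := by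
  intro hadj
  have hp := P.isPath
  rcases hnc _ _ P.walk.start_mem_support (P.walk.getVert_mem_support i) hadj with h | h
  · have := hp.getVert_injOn (Set.mem_ofPred.mpr (by omega)) (Set.mem_ofPred.mpr (by omega))
      (hp.eq_snd_of_mem_edges h)
    omega
  · rcases Sym2.eq_iff.mp h with ⟨-, h⟩ | ⟨-, h⟩
    · have := (hp.getVert_eq_end_iff hi.le).mp h
      omega
    · have := (hp.getVert_eq_start_iff hi.le).mp h
      omega

theorem NoInnerChords.not_adj_getVert_end (hnc : P.NoInnerChords) (h0 : 0 < i)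
    (hi : i < P.walk.length - 1) : ¬ G.Adj (P.walk.getVert i) P.b := by
  intro hadj
  have hp := P.isPath
  rcases hnc _ _ (P.walk.getVert_mem_support i) P.walk.end_mem_support hadj with h | h
  · have := hp.getVert_injOn (Set.mem_ofPred.mpr (by omega)) (Set.mem_ofPred.mpr (by omega))
      (hp.eq_penultimate_of_mem_edges (Sym2.eq_swap ▸ h))
    omega
  · rcases Sym2.eq_iff.mp h with ⟨h, -⟩ | ⟨h, -⟩
    · have := (hp.getVert_eq_start_iff (by omega)).mp h
      omega
    · have := (hp.getVert_eq_end_iff (by omega)).mp h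
      omega

end IndexedPath

/-- in an interval graph, a path without inner chords joining two
adjacent vertices has at most one inner vertex. -/
theorem statement6 {V : Type*} (G : SimpleGraph V) (ρ : IntervalRep G)
    (P : IndexedPath G) (hadj : G.Adj P.a P.b) (hnc : P.NoInnerChords) :
    P.walk.support.tail.dropLast.length ≤ 1 := by
  by_contra! hlong
  rw [P.length_support_tail_dropLast] at hlong
  set n := P.walk.length
  obtain ⟨x, hxa, hxb⟩ := (ρ.adj_iff _ _ hadj.ne).mp hadj
  have hp := P.isPath
  have havoid : ∀ k, 1 ≤ k → k ≤ n - 1 →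
      x ∉ Set.Icc (ρ.l (P.walk.getVert k)) (ρ.r (P.walk.getVert k)) := by
    intro k hk1 hkn hxk
    obtain rfl | hk1 := hk1.eq_or_lt
    · refine hnc.not_adj_getVert_end one_pos (by omega) ((ρ.adj_iff _ _ ?_).mpr ⟨x, hxk, hxb⟩)
      exact mt (hp.getVert_eq_end_iff (by omega)).mp (by omega)
    · refine hnc.not_adj_start_getVert hk1 (by omega) ((ρ.adj_iff _ _ ?_).mpr ⟨x, hxa, hxk⟩)
      exact mt (hp.getVert_eq_start_iff (by omega)).mp (by omega) ∘ Eq.symm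
  have hnil : ¬ P.walk.Nil := by
    rw [← Walk.length_eq_zero_iff]
    omega
  rcases ρ.adj_or_adj_of_same_side hxa hxb (havoid 1 le_rfl (by omega))
    (havoid (n - 1) (by omega) le_rfl)
    (ρ.right_getVert_lt_iff P.walk (by omega) (by omega) havoid).symm
    (P.walk.adj_snd hnil) (P.walk.adj_penultimate hnil).symm with h | h
  · exact hnc.not_adj_start_getVert (by omega) (by omega) h
  · exact hnc.not_adj_getVert_end one_pos (by omega) h.symm
end

section
/- Let G be a simple graph that has an interval representation, let u be a vertex, and let v_1, v_2, v_3 be vertices, each distinct from u and non-adjacent to u. Then there do not exist three mutually induced paths P_1, P_2, P_3 in G such that P_i joins u and v_i for i = 1, 2, 3. -/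
open SimpleGraph

variable {V : Type*}

/-
Two of the three targets lie on the same side of `u` in the representation, say both to the
right, so some point `t` lies strictly between the interval of `u` and the intervals of both
targets. The intervals along a path form a connected chain, so each of the two paths has a vertex
whose interval contains `t`; neither is an end of its path, and two intervals through `t` meet,
so an inner vertex of one path is adjacent to a vertex of the other that is not an end.
-/

namespace IntervalRep

variable {G : SimpleGraph V} (ρ : IntervalRep G)

def Separates (t : ℝ) (x y : V) : Prop :=
  ρ.r x < t ∧ t < ρ.l y ∨ ρ.r y < t ∧ t < ρ.l x

variable {ρ}

theorem Separates.symm {t : ℝ} {x y : V} (h : ρ.Separates t x y) : ρ.Separates t y x :=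
  Or.symm h

theorem Separates.ne_of_mem_Icc {t : ℝ} {x y z : V} (h : ρ.Separates t x y)
    (hz : t ∈ Set.Icc (ρ.l z) (ρ.r z)) : z ≠ x ∧ z ≠ y := by
  constructor <;> rintro rfl <;> rcases h with h | h <;> linarith [hz.1, hz.2]

variable (ρ)

theorem lt_or_lt_of_not_adj {x y : V} (hxy : x ≠ y) (h : ¬ G.Adj x y) :
    ρ.r x < ρ.l y ∨ ρ.r y < ρ.l x := by
  by_contra! hle
  exact h ((ρ.adj_iff x y hxy).2
    ⟨max (ρ.l x) (ρ.l y), ⟨le_max_left _ _, max_le (ρ.lt x).le hle.1⟩,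
      ⟨le_max_right _ _, max_le hle.2 (ρ.lt y).le⟩⟩)

theorem exists_separates_of_not_adj {u a b : V} (ha : a ≠ u) (hb : b ≠ u)
    (hua : ¬ G.Adj u a) (hub : ¬ G.Adj u b) (hside : ρ.r u < ρ.l a ↔ ρ.r u < ρ.l b) :
    ∃ t, ρ.Separates t u a ∧ ρ.Separates t u b := by
  by_cases hright : ρ.r u < ρ.l a
  · obtain ⟨t, hut, ht⟩ := exists_between (lt_min hright (hside.1 hright))
    exact ⟨t, .inl ⟨hut, ht.trans_le (min_le_left _ _)⟩,
      .inl ⟨hut, ht.trans_le (min_le_right _ _)⟩⟩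
  · have hleft_a := (ρ.lt_or_lt_of_not_adj ha.symm hua).resolve_left hright
    have hleft_b := (ρ.lt_or_lt_of_not_adj hb.symm hub).resolve_left (mt hside.2 hright)
    obtain ⟨t, ht, htu⟩ := exists_between (max_lt hleft_a hleft_b)
    exact ⟨t, .inr ⟨(le_max_left _ _).trans_lt ht, htu⟩,
      .inr ⟨(le_max_right _ _).trans_lt ht, htu⟩⟩

theorem exists_mem_support_mem_Icc {a b : V} (w : G.Walk a b) {t : ℝ}
    (ha : ρ.r a ≤ t) (hb : t ≤ ρ.l b) : ∃ x ∈ w.support, t ∈ Set.Icc (ρ.l x) (ρ.r x) := by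
  induction w with
  | @nil a => linarith [ρ.lt a]
  | @cons a c b h p ih =>
    by_cases hc : ρ.r c ≤ t
    · obtain ⟨x, hx, hxt⟩ := ih hc hb
      exact ⟨x, List.mem_cons_of_mem _ hx, hxt⟩
    · obtain ⟨s, hsa, hsc⟩ := (ρ.adj_iff a c h.ne).1 h
      exact ⟨c, by simp, by linarith [hsa.2, hsc.1], (not_le.1 hc).le⟩

end IntervalRep

theorem SimpleGraph.Walk.mem_support_tail_dropLast {G : SimpleGraph V} {a b x : V}
    (w : G.Walk a b) (hx : x ∈ w.support) (ha : x ≠ a) (hb : x ≠ b) :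
    x ∈ w.support.tail.dropLast := by
  cases w with
  | nil => exact absurd (List.mem_singleton.1 hx) ha
  | cons _ p =>
    rw [Walk.support_cons, List.mem_cons, ← p.dropLast_support_concat, List.mem_append,
      List.mem_singleton] at hx
    exact (hx.resolve_left ha).resolve_right hb

namespace IndexedPath

variable {G : SimpleGraph V}

theorem Joins.ends_eq {P : IndexedPath G} {x y : V} (h : P.Joins x y) : P.ends = {x, y} := by
  rcases h with ⟨rfl, rfl⟩ | ⟨rfl, rfl⟩
  · rfl
  · exact Set.pair_comm _ _

theorem isInner_of_mem_support {P : IndexedPath G} {x : V} (hx : x ∈ P.walk.support)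
    (hends : x ∉ P.ends) : P.IsInner x :=
  P.walk.mem_support_tail_dropLast hx (fun h => hends (.inl h)) (fun h => hends (.inr h))

theorem exists_mem_support_mem_Icc (ρ : IntervalRep G) {P : IndexedPath G} {x y : V}
    (hP : P.Joins x y) {t : ℝ} (ht : ρ.Separates t x y) :
    ∃ z ∈ P.walk.support, t ∈ Set.Icc (ρ.l z) (ρ.r z) := by
  have ht' : ρ.Separates t P.a P.b := by
    rcases hP with ⟨rfl, rfl⟩ | ⟨rfl, rfl⟩
    exacts [ht, ht.symm]
  rcases ht' with ⟨ha, hb⟩ | ⟨hb, ha⟩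
  · exact ρ.exists_mem_support_mem_Icc P.walk ha.le hb.le
  · simpa using ρ.exists_mem_support_mem_Icc P.walk.reverse hb.le ha.le

end IndexedPath

theorem MutuallyInduced.false_of_separates {G : SimpleGraph V} {ι : Type*}
    {P : ι → IndexedPath G} (hP : MutuallyInduced P) (ρ : IntervalRep G) {i j : ι} (hij : i ≠ j)
    {u a b : V} (hi : (P i).Joins u a) (hj : (P j).Joins u b) {t : ℝ}
    (ha : ρ.Separates t u a) (hb : ρ.Separates t u b) : False := by
  obtain ⟨-, -, hshare, hinduced⟩ := hP
  obtain ⟨x, hx, hxt⟩ := (P i).exists_mem_support_mem_Icc ρ hi ha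
  obtain ⟨y, hy, hyt⟩ := (P j).exists_mem_support_mem_Icc ρ hj hb
  have hx_ends : x ∉ (P i).ends := by
    rw [hi.ends_eq]; simpa [not_or] using ha.ne_of_mem_Icc hxt
  have hy_ends : y ∉ (P j).ends := by
    rw [hj.ends_eq]; simpa [not_or] using hb.ne_of_mem_Icc hyt
  have hxy : x ≠ y := by
    rintro rfl
    exact hx_ends (hshare i j hij x hx hy).1
  have hadj : G.Adj x y := (ρ.adj_iff x y hxy).2 ⟨t, hxt, hyt⟩
  exact hy_ends (hinduced i j hij x y (IndexedPath.isInner_of_mem_support hx hx_ends) hy hadj).2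

/-- in an interval graph, a vertex `u` cannot be joined to three
vertices `v 0`, `v 1`, `v 2` (each distinct from and non-adjacent to `u`) by
three mutually induced paths. -/
theorem statement7 {V : Type*} (G : SimpleGraph V) (ρ : IntervalRep G)
    (u : V) (v : Fin 3 → V)
    (hne : ∀ i, v i ≠ u) (hnadj : ∀ i, ¬ G.Adj u (v i)) :
    ¬ ∃ P : Fin 3 → IndexedPath G,
        MutuallyInduced P ∧ ∀ i, (P i).Joins u (v i) := by
  rintro ⟨P, hP, hjoin⟩
  obtain ⟨i, j, hij, hside⟩ :=
    Fintype.exists_ne_map_eq_of_card_lt (fun i => ρ.r u < ρ.l (v i)) (by simp)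
  obtain ⟨t, hti, htj⟩ := ρ.exists_separates_of_not_adj (hne i) (hne j) (hnadj i) (hnadj j)
    (Iff.of_eq hside)
  exact hP.false_of_separates ρ hij (hjoin i) (hjoin j) hti htj
end

section
/- Let G be a simple graph with an interval representation assigning interval [l(z), r(z)] to each vertex z. Let u, w, v, x be four pairwise distinct vertices such that u is non-adjacent to w and v is non-adjacent to x. Suppose P_1 is a path joining u and w, P_2 is a path joining v and x, and P_1, P_2 are mutually induced. Then it is not the case that l(u) <= l(v) < l(w). -/
open SimpleGraph

variable {V : Type*}

lemma mem_dropLast_of_ne_getLast {α : Type*} {l : List α} {c : α} (hc : c ∈ l)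
    (h : ∀ hne : l ≠ [], c ≠ l.getLast hne) : c ∈ l.dropLast := by
  have hne : l ≠ [] := by rintro rfl; simp at hc
  have := List.dropLast_append_getLast hne
  rw [← this] at hc
  rcases List.mem_append.mp hc with h1 | h1
  · exact h1
  · simp at h1; exact absurd h1 (h hne)

lemma isInner_of_mem {G : SimpleGraph V} {P : IndexedPath G} {c : V}
    (hc : c ∈ P.walk.support) (ha : c ≠ P.a) (hb : c ≠ P.b) : P.IsInner c := by
  unfold IndexedPath.IsInner
  have htail : c ∈ P.walk.support.tail := by
    have := P.walk.support_eq_cons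
    rw [this] at hc
    rcases List.mem_cons.mp hc with h1 | h1
    · exact absurd h1 ha
    · exact h1
  refine mem_dropLast_of_ne_getLast htail ?_
  intro hne heq
  apply hb
  rw [heq, List.getLast_tail, P.walk.getLast_support]

lemma cover {G : SimpleGraph V} (ρ : IntervalRep G) {a b : V} (W : G.Walk a b)
    {t : ℝ} (h1 : ρ.l a ≤ t) (h2 : t ≤ ρ.l b) :
    ∃ z ∈ W.support, t ∈ Set.Icc (ρ.l z) (ρ.r z) := by
  induction W with
  | nil => exact ⟨_, by simp, h1, h2.trans (ρ.lt _).le⟩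
  | @cons p q s h W ih =>
    by_cases hta : t ≤ ρ.r p
    · exact ⟨p, by simp, h1, hta⟩
    · push_neg at hta
      obtain ⟨s', ⟨_, hs2⟩, hs3, _⟩ := (ρ.adj_iff p q h.ne).mp h
      obtain ⟨z, hz1, hz2⟩ := ih (le_of_lt (lt_of_le_of_lt (hs3.trans hs2) hta)) h2
      exact ⟨z, by simp [hz1], hz2⟩

lemma cover_joins {G : SimpleGraph V} (ρ : IntervalRep G) {P : IndexedPath G} {p q : V}
    (h : P.Joins p q) {t : ℝ} (h1 : ρ.l p ≤ t) (h2 : t ≤ ρ.l q) :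
    ∃ z ∈ P.walk.support, t ∈ Set.Icc (ρ.l z) (ρ.r z) := by
  rcases h with ⟨ha, hb⟩ | ⟨ha, hb⟩
  · subst ha; subst hb; exact cover ρ P.walk h1 h2
  · subst ha; subst hb
    obtain ⟨z, hz1, hz2⟩ := cover ρ P.walk.reverse h1 h2
    rw [Walk.support_reverse, List.mem_reverse] at hz1
    exact ⟨z, hz1, hz2⟩

lemma exists_nbr {G : SimpleGraph V} {a b : V} (W : G.Walk a b)
    (hnadj : ¬ G.Adj a b) (hab : a ≠ b) :
    ∃ c, G.Adj a c ∧ c ∈ W.support ∧ c ≠ b := by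
  cases W with
  | nil => exact absurd rfl hab
  | cons h W => exact ⟨_, h, by simp, fun hc => hnadj (hc ▸ h)⟩

lemma exists_nbr_joins {G : SimpleGraph V} {P : IndexedPath G} {p q : V}
    (h : P.Joins p q) (hnadj : ¬ G.Adj p q) (hpq : p ≠ q) :
    ∃ c, G.Adj p c ∧ c ∈ P.walk.support ∧ c ≠ q := by
  rcases h with ⟨ha, hb⟩ | ⟨ha, hb⟩
  · subst ha; subst hb; exact exists_nbr P.walk hnadj hpq
  · subst ha; subst hb
    obtain ⟨c, h1, h2, h3⟩ := exists_nbr P.walk.reverse hnadj hpq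
    rw [Walk.support_reverse, List.mem_reverse] at h2
    exact ⟨c, h1, h2, h3⟩

lemma ends_joins {G : SimpleGraph V} {P : IndexedPath G} {p q : V} (h : P.Joins p q) :
    P.ends = {p, q} := by
  rcases h with ⟨ha, hb⟩ | ⟨ha, hb⟩ <;> unfold IndexedPath.ends <;> rw [ha, hb]
  exact Set.pair_comm q p

lemma joins_symm {G : SimpleGraph V} {P : IndexedPath G} {p q : V} (h : P.Joins p q) :
    P.Joins q p := by rcases h with ⟨ha, hb⟩ | ⟨ha, hb⟩ <;> [exact Or.inr ⟨ha, hb⟩; exact Or.inl ⟨ha, hb⟩]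

lemma joins_fst_mem {G : SimpleGraph V} {P : IndexedPath G} {p q : V} (h : P.Joins p q) :
    p ∈ P.walk.support := by
  rcases h with ⟨ha, _⟩ | ⟨_, hb⟩
  · rw [← ha]; exact P.walk.start_mem_support
  · rw [← hb]; exact P.walk.end_mem_support


/-- for pairwise distinct vertices `u, w, v, x` with `u` non-adjacent
to `w` and `v` non-adjacent to `x`, if `P₁` joins `u` and `w`, `P₂` joins `v` and
`x`, and `P₁, P₂` are mutually induced, then not `l u ≤ l v < l w`. -/
theorem statement8 {V : Type*} (G : SimpleGraph V) (ρ : IntervalRep G)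
    (u w v x : V) (hdist : [u, w, v, x].Pairwise (· ≠ ·))
    (huw : ¬ G.Adj u w) (hvx : ¬ G.Adj v x)
    (P₁ P₂ : IndexedPath G)
    (h₁ : P₁.Joins u w) (h₂ : P₂.Joins v x)
    (hMI : MutuallyInduced ![P₁, P₂]) :
    ¬ (ρ.l u ≤ ρ.l v ∧ ρ.l v < ρ.l w) := by
  rintro ⟨huv, hvw⟩
  simp only [List.pairwise_cons, List.mem_cons, List.not_mem_nil, or_false, forall_eq_or_imp,
    forall_eq, List.Pairwise.nil, and_true, List.mem_singleton] at hdist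
  obtain ⟨⟨huw', huv', hux'⟩, ⟨hwv', hwx'⟩, hvx', -⟩ := hdist
  obtain ⟨-, -, hshare, hinner⟩ := hMI
  have hshare01 := hshare 0 1 (by decide)
  have hinner01 := hinner 0 1 (by decide)
  have hinner10 := hinner 1 0 (by decide)
  simp only [Matrix.cons_val_zero, Matrix.cons_val_one, Matrix.head_cons]
    at hshare01 hinner01 hinner10
  have ends1 : P₁.ends = {u, w} := ends_joins h₁
  have ends2 : P₂.ends = {v, x} := ends_joins h₂
  have humem : u ∈ P₁.walk.support := joins_fst_mem h₁
  have hvmem : v ∈ P₂.walk.support := joins_fst_mem h₂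
  have hvnotends1 : v ∉ P₁.ends := by
    rw [ends1]; rintro (h | h)
    exacts [huv' h.symm, hwv' h.symm]
  have hunotends2 : u ∉ P₂.ends := by
    rw [ends2]; rintro (h | h)
    exacts [huv' h, hux' h]
  have hvP1 : v ∉ P₁.walk.support := fun hmem => hvnotends1 (hshare01 v hmem hvmem).1
  have huP2 : u ∉ P₂.walk.support := fun hmem => hunotends2 (hshare01 u humem hmem).2
  -- the gap between u's and w's intervals
  have hruw : ρ.r u < ρ.l w := by
    by_contra hcon
    push_neg at hcon
    exact huw ((ρ.adj_iff u w huw').mpr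
      ⟨ρ.l w, ⟨huv.trans hvw.le, hcon⟩, le_refl _, (ρ.lt w).le⟩)
  -- any vertex z of P₁ adjacent to v is impossible unless z = u
  have hinner_z : ∀ z, z ∈ P₁.walk.support → z ≠ u → z ≠ w → ¬ G.Adj z v := by
    intro z hzmem hzu hzw hadj
    have hinn : P₁.IsInner z := by
      rcases h₁ with ⟨ha, hb⟩ | ⟨ha, hb⟩
      · exact isInner_of_mem hzmem (fun hh => hzu (hh.trans ha)) (fun hh => hzw (hh.trans hb))
      · exact isInner_of_mem hzmem (fun hh => hzw (hh.trans ha)) (fun hh => hzu (hh.trans hb))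
    exact hvnotends1 (hinner01 z v hinn hvmem hadj).1
  have hlvru : ρ.l v ≤ ρ.r u := by
    obtain ⟨z, hzmem, hz1, hz2⟩ := cover_joins ρ h₁ huv hvw.le
    by_cases hzu : z = u
    · rw [hzu] at hz2; exact hz2
    by_cases hzw : z = w
    · rw [hzw] at hz1; exact absurd hvw (not_lt.mpr hz1)
    have hzv : z ≠ v := fun h => hvP1 (h ▸ hzmem)
    exact absurd ((ρ.adj_iff z v hzv).mpr ⟨ρ.l v, ⟨hz1, hz2⟩, le_refl _, (ρ.lt v).le⟩)
      (hinner_z z hzmem hzu hzw)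
  have hrvru : ρ.r v ≤ ρ.r u := by
    by_contra hcon
    push_neg at hcon
    have hrum : ρ.r u < min (ρ.r v) (ρ.l w) := lt_min hcon hruw
    set t := (ρ.r u + min (ρ.r v) (ρ.l w)) / 2 with ht
    have ht1 : ρ.r u < t := by rw [ht]; linarith
    have ht2 : t < min (ρ.r v) (ρ.l w) := by rw [ht]; linarith
    have htv : t < ρ.r v := ht2.trans_le (min_le_left _ _)
    have htw : t < ρ.l w := ht2.trans_le (min_le_right _ _)
    obtain ⟨z, hzmem, hz1, hz2⟩ := cover_joins ρ h₁ (t := t) (by linarith) htw.le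
    have hzu : z ≠ u := fun h => (not_le.mpr ht1) (h ▸ hz2)
    have hzw : z ≠ w := fun h => (not_le.mpr htw) (h ▸ hz1)
    have hzv : z ≠ v := fun h => hvP1 (h ▸ hzmem)
    exact absurd ((ρ.adj_iff z v hzv).mpr ⟨t, ⟨hz1, hz2⟩, by linarith, htv.le⟩)
      (hinner_z z hzmem hzu hzw)
  -- the neighbour of v on P₂
  obtain ⟨c, hadjvc, hcmem, hcx⟩ := exists_nbr_joins h₂ hvx hvx'
  have hcv : c ≠ v := hadjvc.ne'
  have hinn2 : P₂.IsInner c := by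
    rcases h₂ with ⟨ha, hb⟩ | ⟨ha, hb⟩
    · exact isInner_of_mem hcmem (fun hh => hcv (hh.trans ha)) (fun hh => hcx (hh.trans hb))
    · exact isInner_of_mem hcmem (fun hh => hcx (hh.trans ha)) (fun hh => hcv (hh.trans hb))
  obtain ⟨s, ⟨hsv1, hsv2⟩, hsc1, hsc2⟩ := (ρ.adj_iff v c hadjvc.ne).mp hadjvc
  have hcu : c ≠ u := fun h => huP2 (h ▸ hcmem)
  have hadjcu : G.Adj c u := (ρ.adj_iff c u hcu).mpr
    ⟨s, ⟨hsc1, hsc2⟩, by linarith, by linarith⟩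
  exact hunotends2 (hinner10 c u hinn2 humem hadjcu).1
end

section
/- Let G be a simple graph with an interval representation assigning interval [l(z), r(z)] to each vertex z. Let u and v be non-adjacent vertices with r(u) < l(v), and let P = u x_1 x_2 ... x_r v be a path in G with no inner chords, where r >= 3. Then every vertex x_i with 2 <= i <= r-1 satisfies r(u) < l(x_i) and r(x_i) < l(v) (in particular, x_i is adjacent to neither u nor v, i.e., x_i does not belong to N[u] ∪ N[v]), and the vertices x_2,...,x_{r-1} all lie in the same connected component of the induced subgraph G - (N[u] ∪ N[v]). -/
open SimpleGraph

variable {V : Type*}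

/-! A chordless path `u x₁ … x_r v` has no edge from `u` to `x₂, …, x_r`, so, `uv` not being
an edge, `x₂ … x_r v` is a walk in `G - N[u]`. In an interval graph the intervals of a connected
set of vertices avoiding `N[u]` all lie on one side of the interval of `u`; here that is the side
of `v`, so `r u < l xᵢ`. Reversing the path and mirroring the line gives `r xᵢ < l v`, and
`x₂ … x_{r-1}` is then a walk in `G - (N[u] ∪ N[v])`. -/

namespace IntervalRep

variable {G : SimpleGraph V} (ρ : IntervalRep G)

theorem adj_iff_max_le_min {a b : V} (hab : a ≠ b) :
    G.Adj a b ↔ max (ρ.l a) (ρ.l b) ≤ min (ρ.r a) (ρ.r b) := by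
  rw [ρ.adj_iff a b hab, Set.Icc_inter_Icc, Set.nonempty_Icc]

theorem l_le_r_of_adj {a b : V} (h : G.Adj a b) : ρ.l a ≤ ρ.r b :=
  (le_max_left _ _).trans <| ((ρ.adj_iff_max_le_min h.ne).1 h).trans (min_le_right _ _)

theorem not_adj_of_r_lt_l {a b : V} (h : ρ.r a < ρ.l b) : ¬ G.Adj a b :=
  fun hab => (ρ.l_le_r_of_adj hab.symm).not_gt h

theorem r_lt_l_or_r_lt_l_of_not_adj {a b : V} (hab : a ≠ b) (h : ¬ G.Adj a b) :
    ρ.r a < ρ.l b ∨ ρ.r b < ρ.l a := by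
  rw [ρ.adj_iff_max_le_min hab, max_le_iff, le_min_iff, le_min_iff] at h
  have ha := ρ.lt a
  have hb := ρ.lt b
  by_contra! h'
  exact h ⟨⟨ha.le, h'.2⟩, h'.1, hb.le⟩

def neg : IntervalRep G where
  l z := -ρ.r z
  r z := -ρ.l z
  lt z := neg_lt_neg (ρ.lt z)
  adj_iff a b hab := by
    rw [ρ.adj_iff a b hab, Set.Icc_inter_Icc, Set.Icc_inter_Icc, Set.nonempty_Icc,
      Set.nonempty_Icc, max_neg_neg, min_neg_neg, neg_le_neg_iff]

@[simp] theorem neg_l (z : V) : ρ.neg.l z = -ρ.r z := rfl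

@[simp] theorem neg_r (z : V) : ρ.neg.r z = -ρ.l z := rfl

theorem r_lt_l_of_adj_of_notMem {u a b : V} (hab : G.Adj a b)
    (ha : a ∉ insert u (G.neighborSet u)) (hb : ρ.r u < ρ.l b) : ρ.r u < ρ.l a := by
  rw [Set.mem_insert_iff, not_or, mem_neighborSet] at ha
  refine (ρ.r_lt_l_or_r_lt_l_of_not_adj (Ne.symm ha.1) ha.2).resolve_right fun hau => ?_
  have := ρ.l_le_r_of_adj hab.symm
  have := ρ.lt u
  linarith

theorem r_lt_l_of_reachable {u : V} {a b : ↥(insert u (G.neighborSet u))ᶜ}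
    (h : (G.induce (insert u (G.neighborSet u))ᶜ).Reachable a b) (hb : ρ.r u < ρ.l b) :
    ρ.r u < ρ.l a := by
  obtain ⟨p⟩ := h
  induction p with
  | nil => exact hb
  | @cons x _ _ hadj _ ih => exact ρ.r_lt_l_of_adj_of_notMem hadj x.2 (ih hb)

end IntervalRep

theorem List.tail_dropLast_tail_dropLast_infix_tail_tail {α : Type*} (l : List α) :
    l.tail.dropLast.tail.dropLast <:+: l.tail.tail := by
  rw [List.tail_dropLast]
  exact ((List.dropLast_prefix _).trans (List.dropLast_prefix _)).isInfix

theorem List.tail_dropLast_tail_dropLast_infix_dropLast_dropLast {α : Type*} (l : List α) :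
    l.tail.dropLast.tail.dropLast <:+: l.dropLast.dropLast := by
  rw [← List.tail_dropLast, ← List.tail_dropLast, ← List.tail_dropLast]
  exact ((List.tail_suffix _).trans (List.tail_suffix _)).isInfix

theorem List.IsChain.induce_reachable_head {G : SimpleGraph V} {s : Set V} {a : V} {l : List V}
    (hl : (a :: l).IsChain G.Adj) (hs : ∀ x ∈ a :: l, x ∈ s) {y : V} (hy : y ∈ a :: l) :
    (G.induce s).Reachable ⟨a, hs a mem_cons_self⟩ ⟨y, hs y hy⟩ := by
  induction l generalizing a with
  | nil => obtain rfl := List.mem_singleton.1 hy; rfl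
  | cons b l ih =>
    rcases List.mem_cons.1 hy with rfl | hy
    · rfl
    have hab : (G.induce s).Adj ⟨a, hs a mem_cons_self⟩ ⟨b, hs b (by simp)⟩ :=
      (List.isChain_cons_cons.1 hl).1
    exact hab.reachable.trans
      (ih (List.isChain_cons_cons.1 hl).2 (fun x hx => hs x (mem_cons_of_mem a hx)) hy)

theorem List.IsChain.induce_reachable {G : SimpleGraph V} {s : Set V} {l : List V}
    (hl : l.IsChain G.Adj) (hs : ∀ x ∈ l, x ∈ s) {x y : V} (hx : x ∈ l) (hy : y ∈ l) :
    (G.induce s).Reachable ⟨x, hs x hx⟩ ⟨y, hs y hy⟩ := by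
  obtain ⟨a, l, rfl⟩ := List.exists_cons_of_ne_nil (List.ne_nil_of_mem hx)
  exact (hl.induce_reachable_head hs hx).symm.trans (hl.induce_reachable_head hs hy)

namespace SimpleGraph.Walk

variable {G : SimpleGraph V} {u v : V}

def NoInnerChords (w : G.Walk u v) : Prop :=
  ∀ x y, x ∈ w.support → y ∈ w.support → G.Adj x y →
    s(x, y) ∈ w.edges ∨ s(x, y) = s(u, v)

theorem NoInnerChords.reverse {w : G.Walk u v} (hw : w.NoInnerChords) :
    w.reverse.NoInnerChords := by
  intro x y hx hy hxy
  rw [support_reverse, List.mem_reverse] at hx hy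
  rw [edges_reverse, List.mem_reverse, Sym2.eq_swap (a := v)]
  exact hw x y hx hy hxy

theorem IsPath.notMem_of_mem_tail_tail {w : G.Walk u v} (hw : w.IsPath) (hc : w.NoInnerChords)
    (huv : ¬ G.Adj u v) {y : V} (hy : y ∈ w.support.tail.tail) :
    y ∉ insert u (G.neighborSet u) := by
  cases w with
  | nil => simp at hy
  | cons h p =>
    have hp := (cons_isPath_iff h p).1 hw
    have hyp : y ∈ p.support := List.mem_of_mem_tail hy
    rintro (rfl | hadj)
    · exact hp.2 hyp
    rcases hc u y (start_mem_support _) (by simp [hyp]) hadj with he | he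
    · have hsnd := hw.eq_snd_of_mem_edges he
      rw [snd_cons] at hsnd
      subst hsnd
      have hnodup := hp.1.support_nodup
      rw [← p.cons_tail_support] at hnodup
      exact (List.nodup_cons.1 hnodup).1 hy
    · rcases Sym2.eq_iff.1 he with ⟨-, rfl⟩ | ⟨-, rfl⟩
      · exact huv hadj
      · exact hp.2 hyp

end SimpleGraph.Walk

theorem IntervalRep.r_lt_l_of_mem_tail_tail {G : SimpleGraph V} (ρ : IntervalRep G) {u v : V}
    {w : G.Walk u v} (hw : w.IsPath) (hc : w.NoInnerChords) (hlt : ρ.r u < ρ.l v) {y : V}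
    (hy : y ∈ w.support.tail.tail) : ρ.r u < ρ.l y := by
  have hout : ∀ x ∈ w.support.tail.tail, x ∈ (insert u (G.neighborSet u))ᶜ :=
    fun x hx => hw.notMem_of_mem_tail_tail hc (ρ.not_adj_of_r_lt_l hlt) hx
  have hv : v ∈ w.support.tail.tail := by
    have hne : w.support.tail.tail ≠ [] := List.ne_nil_of_mem hy
    simpa only [List.getLast_tail, w.getLast_support] using List.getLast_mem hne
  exact ρ.r_lt_l_of_reachable (w.isChain_adj_support.tail.tail.induce_reachable hout hy hv) hlt

theorem statement9_general {V : Type*} (G : SimpleGraph V) (ρ : IntervalRep G)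
    (u v : V) (hlt : ρ.r u < ρ.l v)
    (P : IndexedPath G) (hPa : P.a = u) (hPb : P.b = v)
    (hnc : P.NoInnerChords) :
    (∀ y ∈ P.walk.support.tail.dropLast.tail.dropLast,
        (ρ.r u < ρ.l y ∧ ρ.r y < ρ.l v) ∧
        y ∉ (insert u (G.neighborSet u) ∪ insert v (G.neighborSet v))) ∧
    (∀ y z : V,
        ∀ hy : y ∈ (insert u (G.neighborSet u) ∪ insert v (G.neighborSet v))ᶜ,
        ∀ hz : z ∈ (insert u (G.neighborSet u) ∪ insert v (G.neighborSet v))ᶜ,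
        y ∈ P.walk.support.tail.dropLast.tail.dropLast →
        z ∈ P.walk.support.tail.dropLast.tail.dropLast →
        (G.induce ((insert u (G.neighborSet u) ∪ insert v (G.neighborSet v))ᶜ)).Reachable
          ⟨y, hy⟩ ⟨z, hz⟩) := by
  obtain ⟨a, b, w, hw⟩ := P
  subst hPa hPb
  have hc : w.NoInnerChords := hnc
  have huv : ¬ G.Adj a b := ρ.not_adj_of_r_lt_l hlt
  have hfront := w.support.tail_dropLast_tail_dropLast_infix_tail_tail
  have hback : ∀ y ∈ w.support.tail.dropLast.tail.dropLast, y ∈ w.reverse.support.tail.tail :=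
    fun y hy => by
      rw [Walk.support_reverse, List.tail_reverse, List.tail_reverse, List.mem_reverse]
      exact (w.support.tail_dropLast_tail_dropLast_infix_dropLast_dropLast).subset hy
  have hout : ∀ y ∈ w.support.tail.dropLast.tail.dropLast,
      y ∉ insert a (G.neighborSet a) ∪ insert b (G.neighborSet b) := fun y hy h =>
    h.elim (hw.notMem_of_mem_tail_tail hc huv (hfront.subset hy))
      (hw.reverse.notMem_of_mem_tail_tail hc.reverse (fun h => huv h.symm) (hback y hy))
  refine ⟨fun y hy => ⟨⟨ρ.r_lt_l_of_mem_tail_tail hw hc hlt (hfront.subset hy), ?_⟩, hout y hy⟩,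
    fun y z _ _ hy hz => (w.isChain_adj_support.tail.tail.infix hfront).induce_reachable hout hy hz⟩
  simpa using ρ.neg.r_lt_l_of_mem_tail_tail hw.reverse hc.reverse (by simpa using hlt) (hback y hy)

/-- let `u, v` be non-adjacent vertices with `r u < l v` and let
`P = u x₁ ... x_r v` be a path with no inner chords, `r ≥ 3`. Then each `xᵢ` with
`2 ≤ i ≤ r-1` satisfies `r u < l xᵢ` and `r xᵢ < l v` (in particular it lies
outside `N[u] ∪ N[v]`), and all these vertices lie in the same connected component
of the subgraph induced on the complement of `N[u] ∪ N[v]`. -/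
theorem statement9 {V : Type*} (G : SimpleGraph V) (ρ : IntervalRep G)
    (u v : V) (hne : u ≠ v) (hnadj : ¬ G.Adj u v) (hlt : ρ.r u < ρ.l v)
    (P : IndexedPath G) (hPa : P.a = u) (hPb : P.b = v)
    (hnc : P.NoInnerChords)
    (r : ℕ) (hr : 3 ≤ r)
    (hlen : P.walk.support.tail.dropLast.length = r) :
    (∀ y ∈ P.walk.support.tail.dropLast.tail.dropLast,
        (ρ.r u < ρ.l y ∧ ρ.r y < ρ.l v) ∧
        y ∉ (insert u (G.neighborSet u) ∪ insert v (G.neighborSet v))) ∧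
    (∀ y z : V,
        ∀ hy : y ∈ (insert u (G.neighborSet u) ∪ insert v (G.neighborSet v))ᶜ,
        ∀ hz : z ∈ (insert u (G.neighborSet u) ∪ insert v (G.neighborSet v))ᶜ,
        y ∈ P.walk.support.tail.dropLast.tail.dropLast →
        z ∈ P.walk.support.tail.dropLast.tail.dropLast →
        (G.induce ((insert u (G.neighborSet u) ∪ insert v (G.neighborSet v))ᶜ)).Reachable
          ⟨y, hy⟩ ⟨z, hz⟩) :=
  statement9_general G ρ u v hlt P hPa hPb hnc
end

section
/- Let φ be an instance of 3-SAT with variables x_1,...,x_n and clauses C_1,...,C_m, where each clause is a triple of literals (a literal being a variable or its negation). Construct the simple graph G and coloring c as follows: for each variable x_i there are two adjacent vertices x_i and x̄_i, both with c-value i; for each clause C_j there are three vertices, each with c-value n+j, where the p-th of these vertices (p = 1,2,3) is adjacent exactly to the literal vertex corresponding to the p-th literal of C_j. Then φ is satisfiable if and only if G has an independent set I such that every color in {1,...,n+m} is the c-value of some vertex of I (with the correspondence that a satisfying assignment sets x_i to true if and only if the vertex x_i is not in I). -/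
/-- The graph of the reduction from 3-SAT to Multicolored Independent Set.
Vertices: a literal vertex `Sum.inl (i, b)` for every variable `i` and polarity `b`
(`(i, true)` is `xᵢ`, `(i, false)` is `x̄ᵢ`), and a clause vertex `Sum.inr (j, p)`
for every clause `j` and position `p` in it. Edges: the two literal vertices of
each variable are adjacent, and the `p`-th vertex of clause `j` is adjacent exactly
to the literal vertex corresponding to the `p`-th literal of clause `j`. -/
def satGraph (n m : ℕ) (C : Fin m → Fin 3 → Fin n × Bool) :
    SimpleGraph ((Fin n × Bool) ⊕ (Fin m × Fin 3)) :=
  SimpleGraph.fromRel (fun x y =>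
    match x, y with
    | Sum.inl (i, b), Sum.inl (i', b') => i = i' ∧ b ≠ b'
    | Sum.inl lit, Sum.inr (j, p) => C j p = lit
    | _, _ => False)

/-- The coloring of the reduction: both literal vertices of variable `i` get color
`i + 1` (a color in `{1, ..., n}`), and the three vertices of clause `j` get color
`n + j + 1` (a color in `{n+1, ..., n+m}`). -/
def satColor (n m : ℕ) : (Fin n × Bool) ⊕ (Fin m × Fin 3) → ℕ
  | Sum.inl (i, _) => (i : ℕ) + 1
  | Sum.inr (j, _) => n + (j : ℕ) + 1

/-- a 3-SAT instance (with clauses given as triples of literals, a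
literal being a pair of a variable and a polarity) is satisfiable iff the graph of
the reduction has an independent set containing a vertex of every color
`1, ..., n + m`. -/
theorem statement12 (n m : ℕ) (C : Fin m → Fin 3 → Fin n × Bool) :
    (∃ τ : Fin n → Bool, ∀ j : Fin m, ∃ p : Fin 3, τ (C j p).1 = (C j p).2) ↔
    (∃ I : Set ((Fin n × Bool) ⊕ (Fin m × Fin 3)),
      (∀ x ∈ I, ∀ y ∈ I, ¬ (satGraph n m C).Adj x y) ∧
      (∀ col : ℕ, 1 ≤ col → col ≤ n + m → ∃ v ∈ I, satColor n m v = col)) := by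
  constructor
  · rintro ⟨τ, hτ⟩
    choose p hp using hτ
    refine ⟨{v | (∃ i, v = Sum.inl (i, !τ i)) ∨ (∃ j, v = Sum.inr (j, p j))}, ?_, ?_⟩
    · rintro x hx y hy hadj
      rw [satGraph, SimpleGraph.fromRel_adj] at hadj
      obtain ⟨hne, h⟩ := hadj
      rcases hx with ⟨i, rfl⟩ | ⟨j, rfl⟩ <;> rcases hy with ⟨i', rfl⟩ | ⟨j', rfl⟩
      · rcases h with ⟨h1, h2⟩ | ⟨h1, h2⟩ <;> subst h1 <;> simp at h2
      · rcases h with h | h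
        · have h1 := hp j'
          rw [h] at h1
          simp at h1
        · exact h
      · rcases h with h | h
        · exact h
        · have h1 := hp j
          rw [h] at h1
          simp at h1
      · rcases h with h | h <;> exact h
    · intro col h1 h2
      by_cases hc : col ≤ n
      · refine ⟨Sum.inl (⟨col - 1, by omega⟩, !τ ⟨col - 1, by omega⟩), Or.inl ⟨_, rfl⟩, ?_⟩
        simp [satColor]
        omega
      · refine ⟨Sum.inr (⟨col - n - 1, by omega⟩, p ⟨col - n - 1, by omega⟩),
          Or.inr ⟨_, rfl⟩, ?_⟩
        simp [satColor]
        omega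
  · rintro ⟨I, hind, hcol⟩
    classical
    refine ⟨fun i => decide (Sum.inl (i, true) ∉ I), fun j => ?_⟩
    obtain ⟨v, hv, hvc⟩ := hcol (n + (j : ℕ) + 1) (by omega) (by omega)
    obtain ⟨i, b⟩ | ⟨j', q⟩ := v
    · simp [satColor] at hvc
      omega
    · simp [satColor] at hvc
      obtain rfl : j = j' := Fin.ext hvc.symm
      refine ⟨q, ?_⟩
      have hnot : Sum.inl (C j q) ∉ I := fun hmem =>
        hind _ hmem _ hv (by
          rw [satGraph, SimpleGraph.fromRel_adj]
          exact ⟨by simp, Or.inl rfl⟩)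
      simp only []
      cases hb : (C j q).2 with
      | true =>
        have hT : Sum.inl ((C j q).1, true) ∉ I := by
          rw [show ((C j q).1, true) = C j q from by rw [← hb]]
          exact hnot
        exact decide_eq_true hT
      | false =>
        have hfalse : Sum.inl ((C j q).1, false) ∉ I := by
          rw [show ((C j q).1, false) = C j q from by rw [← hb]]
          exact hnot
        obtain ⟨w, hw, hwc⟩ := hcol ((C j q).1 + 1) (by omega)
          (by have := (C j q).1.isLt; omega)
        obtain ⟨i, b⟩ | ⟨j', q'⟩ := w
        · simp [satColor] at hwc
          obtain rfl : (C j q).1 = i := Fin.ext hwc.symm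
          cases b with
          | false => exact absurd hw hfalse
          | true => exact decide_eq_false (not_not_intro hw)
        · simp [satColor] at hwc
          have := (C j q).1.isLt
          omega
end
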